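/- Let δ : [0,∞) → [0,1] and d : [0,∞) → ℝ be such that for every t ≥ 0 the function δ has (one-sided, within [0,∞)) derivative d(t) at t, d(t) ≤ 0 for all t ≥ 0, δ(0) = 1, and δ(t+s) ≥ δ(t)·δ(s) for all s, t ≥ 0. Then |d(t)| ≤ |d(0)|·δ(t) (and in particular |d(t)| ≤ |d(0)|) for every t ≥ 0. (Consequence of Lemma 2.3 used in the proof of Lemma 3.4, estimate (3.18).) -/

import Mathlib

open Set

theorem IsLocalMinOn.hasDerivWithinAt_Ici_nonneg {f : ℝ → ℝ} {f' a : ℝ}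
    (h : IsLocalMinOn f (Ici a) a) (hf : HasDerivWithinAt f f' (Ici a) a) : 0 ≤ f' := by
  have h1 : (1 : ℝ) ∈ posTangentConeAt (Ici a) a :=
    mem_posTangentConeAt_of_segment_subset <| by
      rw [segment_eq_Icc (by linarith)]
      exact Icc_subset_Ici_self
  simpa using h.hasFDerivWithinAt_nonneg hf h1

/-- `s ↦ δ (t + s) - δ t * δ s` is nonnegative and vanishes at `s = 0`, so its right derivative
`dₜ - δ t * d₀` there is nonnegative. -/
theorem mul_le_of_hasDerivWithinAt_of_le_add {δ : ℝ → ℝ} {d₀ dₜ t : ℝ} (ht : 0 ≤ t)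
    (h₀ : HasDerivWithinAt δ d₀ (Ici 0) 0) (hₜ : HasDerivWithinAt δ dₜ (Ici 0) t)
    (hδ0 : δ 0 = 1) (hsub : ∀ s, 0 ≤ s → δ t * δ s ≤ δ (t + s)) :
    δ t * d₀ ≤ dₜ := by
  have hshift : HasDerivWithinAt (fun s => δ (t + s)) dₜ (Ici 0) 0 := by
    have hmaps : MapsTo (t + ·) (Ici (0 : ℝ)) (Ici 0) := fun s hs => add_nonneg ht hs
    have h := hₜ.comp_of_eq (x := 0) ((hasDerivWithinAt_id 0 _).const_add t) hmaps (add_zero t).symm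
    rwa [mul_one] at h
  have hmin : IsLocalMinOn (fun s => δ (t + s) - δ t * δ s) (Ici 0) 0 := by
    refine IsMinOn.localize fun s hs => ?_
    simpa [hδ0] using hsub s hs
  linarith [hmin.hasDerivWithinAt_Ici_nonneg (hshift.sub (h₀.const_mul (δ t)))]

/-- Consequence of Lemma 2.3 used in estimate (3.18): `|d t| ≤ |d 0| * δ t` and in
particular `|d t| ≤ |d 0|` for all `t ≥ 0`. -/
theorem stmt_2 (δ d : ℝ → ℝ)
    (hrange : ∀ t : ℝ, 0 ≤ t → δ t ∈ Set.Icc (0 : ℝ) 1)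
    (hderiv : ∀ t : ℝ, 0 ≤ t → HasDerivWithinAt δ (d t) (Set.Ici 0) t)
    (hdneg : ∀ t : ℝ, 0 ≤ t → d t ≤ 0)
    (hδ0 : δ 0 = 1)
    (hsub : ∀ s t : ℝ, 0 ≤ s → 0 ≤ t → δ (t + s) ≥ δ t * δ s) :
    ∀ t : ℝ, 0 ≤ t → |d t| ≤ |d 0| * δ t ∧ |d t| ≤ |d 0| := by
  intro t ht
  have key : δ t * d 0 ≤ d t :=
    mul_le_of_hasDerivWithinAt_of_le_add ht (hderiv 0 le_rfl) (hderiv t ht) hδ0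
      fun s hs => hsub s t hs ht
  rw [abs_of_nonpos (hdneg 0 le_rfl), abs_of_nonpos (hdneg t ht)]
  have hδt := (hrange t ht).2
  constructor <;> nlinarith [hdneg 0 le_rfl]
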